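/- If the Hahn series ring R((Γ)) over a linearly ordered abelian group Γ is a right Ikeda–Nakayama ring, then so is R. -/

import Mathlib

/-- A right ideal (as a subset). -/
def IsRightIdeal {S : Type*} [Ring S] (I : Set S) : Prop :=
  0 ∈ I ∧ (∀ a ∈ I, ∀ b ∈ I, a + b ∈ I) ∧ (∀ a ∈ I, -a ∈ I) ∧
    ∀ a ∈ I, ∀ r : S, a * r ∈ I

/-- A ring `S` is a right Ikeda–Nakayama ring if `ℓ(I ∩ J) = ℓ(I) + ℓ(J)`
for all right ideals `I`, `J` of `S`. -/
def IsRightIN (S : Type*) [Ring S] : Prop :=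
  ∀ I J : Set S, IsRightIdeal I → IsRightIdeal J →
    {x : S | ∀ a ∈ I ∩ J, x * a = 0} =
      {x : S | ∃ y z : S, (∀ a ∈ I, y * a = 0) ∧ (∀ a ∈ J, z * a = 0) ∧ x = y + z}

/-!
Extend a right ideal `I` of `R` coefficientwise to the right ideal `I((Γ))` of `R((Γ))`.
Multiplication by the constant series `single 0 x` acts coefficientwise, so `x ∈ ℓ(I ∩ J)` gives
`single 0 x ∈ ℓ(I((Γ)) ∩ J((Γ))) = ℓ(I((Γ))) + ℓ(J((Γ)))`; testing a decomposition `Y + Z`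
against constant series shows that the coefficients of `Y` and `Z` at `0` lie in `ℓ(I)` and `ℓ(J)`.
-/

open HahnSeries

/-- The inclusion `ℓ(I) + ℓ(J) ⊆ ℓ(I ∩ J)` always holds. -/
theorem isRightIN_iff {S : Type*} [Ring S] :
    IsRightIN S ↔ ∀ I J : Set S, IsRightIdeal I → IsRightIdeal J → ∀ x : S,
      (∀ a ∈ I ∩ J, x * a = 0) →
        ∃ y z : S, (∀ a ∈ I, y * a = 0) ∧ (∀ a ∈ J, z * a = 0) ∧ x = y + z := by
  refine ⟨fun h I J hI hJ x hx => (h I J hI hJ).subset hx, fun h I J hI hJ => ?_⟩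
  refine Set.Subset.antisymm (h I J hI hJ) ?_
  rintro _ ⟨y, z, hy, hz, rfl⟩ a ⟨haI, haJ⟩
  rw [add_mul, hy a haI, hz a haJ, add_zero]

/-- `I((Γ))` -/
def hahnSeriesOver (Γ : Type*) [PartialOrder Γ] {R : Type*} [Zero R] (I : Set R) :
    Set (HahnSeries Γ R) :=
  {f | ∀ g, f.coeff g ∈ I}

section HahnSeries

variable {Γ R : Type*} [PartialOrder Γ]

theorem single_zero_mem_hahnSeriesOver [Zero Γ] [Zero R] {I : Set R} (h0 : (0 : R) ∈ I) {a : R}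
    (ha : a ∈ I) : single (0 : Γ) a ∈ hahnSeriesOver Γ I := by
  intro g
  rcases eq_or_ne g 0 with rfl | hg
  · simpa using ha
  · simpa [coeff_single_of_ne hg] using h0

variable [AddCommMonoid Γ] [IsOrderedCancelAddMonoid Γ]

theorem IsRightIdeal.hahnSeriesOver [Ring R] {I : Set R} (hI : IsRightIdeal I) :
    IsRightIdeal (hahnSeriesOver Γ I) := by
  obtain ⟨h0, hadd, hneg, hmul⟩ := hI
  let M : AddSubmonoid R :=
    { carrier := I, zero_mem' := h0, add_mem' := fun ha hb => hadd _ ha _ hb }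
  refine ⟨fun g => h0, fun f hf f' hf' g => hadd _ (hf g) _ (hf' g),
    fun f hf g => hneg _ (hf g), fun f hf r g => ?_⟩
  rw [coeff_mul]
  exact M.sum_mem fun ij _ => hmul _ (hf ij.1) (r.coeff ij.2)

theorem single_zero_mul_eq_zero [Ring R] {I : Set R} {x : R} (hx : ∀ a ∈ I, x * a = 0)
    {f : HahnSeries Γ R} (hf : f ∈ hahnSeriesOver Γ I) : single 0 x * f = 0 := by
  ext g
  rw [coeff_single_zero_mul, hx _ (hf g), coeff_zero]

theorem coeff_zero_mul_eq_zero [Ring R] {I : Set R} (h0 : (0 : R) ∈ I) {Y : HahnSeries Γ R}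
    (hY : ∀ f ∈ hahnSeriesOver Γ I, Y * f = 0) {a : R} (ha : a ∈ I) : Y.coeff 0 * a = 0 := by
  rw [← coeff_mul_single_zero, hY _ (single_zero_mem_hahnSeriesOver h0 ha), coeff_zero]

end HahnSeries

/-- If the Hahn series ring `R((Γ))` is a right Ikeda–Nakayama ring, then so is `R`. -/
theorem rightIN_of_hahnSeries {R : Type*} [Ring R] (Γ : Type*)
    [AddCommGroup Γ] [LinearOrder Γ] [IsOrderedAddMonoid Γ] (h : IsRightIN (HahnSeries Γ R)) :
    IsRightIN R := by
  refine isRightIN_iff.mpr fun I J hI hJ x hx => ?_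
  have hxΓ : ∀ f ∈ hahnSeriesOver Γ I ∩ hahnSeriesOver Γ J, single 0 x * f = 0 :=
    fun f hf => single_zero_mul_eq_zero hx fun g => ⟨hf.1 g, hf.2 g⟩
  obtain ⟨Y, Z, hY, hZ, hYZ⟩ :=
    (h _ _ hI.hahnSeriesOver hJ.hahnSeriesOver).subset hxΓ
  refine ⟨Y.coeff 0, Z.coeff 0, fun a => coeff_zero_mul_eq_zero hI.1 hY,
    fun a => coeff_zero_mul_eq_zero hJ.1 hZ, ?_⟩
  simpa using congrArg (coeff · 0) hYZ
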